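/- Let n ≥ 2 and let B be any n×n complex matrix. Then Σ_{i≠j} |(Bᴴ B)_{ij}| ≤ Σ_{i≠j} Σ_{k∉{i,j}} |B_{ki}|² + 2·√( (n−1) · (Σ_i |B_{ii}|²) · (Σ_{i≠j} |B_{ij}|²) ). -/

import Mathlib

/-!
Bound `|(BᴴB)_{ij}| ≤ ∑_k |B_{ki}| |B_{kj}|` and split off the two terms `k ∈ {i, j}`. The
remaining terms are handled by AM-GM, `|B_{ki}| |B_{kj}| ≤ (|B_{ki}|² + |B_{kj}|²) / 2`, whose two
halves coincide after exchanging `i` and `j`. By the same exchange the split-off terms contribute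
`2 ∑_{i≠j} |B_{ii}| |B_{ij}|`, and Cauchy–Schwarz over the pairs `i ≠ j` bounds this sum by
`√((n-1) ∑_i |B_{ii}|² ∑_{i≠j} |B_{ij}|²)`.
-/

open Matrix Finset

section OffDiagonal

variable {ι : Type*} [Fintype ι] [DecidableEq ι]

theorem sum_sum_filter_ne_comm {M : Type*} [AddCommMonoid M] (f : ι → ι → M) :
    ∑ i, ∑ j ∈ univ.filter (fun j => j ≠ i), f i j
      = ∑ i, ∑ j ∈ univ.filter (fun j => j ≠ i), f j i := by
  simp only [sum_filter]
  rw [sum_comm]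
  simp only [ne_comm]

theorem sum_eq_sum_filter_ne_ne_add {M : Type*} [AddCommMonoid M] (g : ι → M) {i j : ι}
    (hij : i ≠ j) :
    ∑ k, g k = ∑ k ∈ univ.filter (fun k => k ≠ i ∧ k ≠ j), g k + (g i + g j) := by
  rw [← sum_filter_add_sum_filter_not univ (fun k => k ≠ i ∧ k ≠ j)]
  congr 1
  have hpair : univ.filter (fun k : ι => ¬(k ≠ i ∧ k ≠ j)) = {i, j} := by
    ext k
    simp only [mem_filter, mem_univ, true_and, mem_insert, mem_singleton]
    tauto
  rw [hpair, sum_pair hij]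

theorem sum_sum_filter_ne_sum_mul {R : Type*} [CommSemiring R] (a : ι → ι → R) :
    ∑ i, ∑ j ∈ univ.filter (fun j => j ≠ i), ∑ k, a k i * a k j
      = ∑ i, ∑ j ∈ univ.filter (fun j => j ≠ i),
          ∑ k ∈ univ.filter (fun k => k ≠ i ∧ k ≠ j), a k i * a k j
        + 2 * ∑ i, ∑ j ∈ univ.filter (fun j => j ≠ i), a i i * a i j := by
  have hsplit : ∀ i, ∀ j ∈ univ.filter (fun j => j ≠ i), ∑ k, a k i * a k j
      = ∑ k ∈ univ.filter (fun k => k ≠ i ∧ k ≠ j), a k i * a k j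
        + (a i i * a i j + a j i * a j j) := fun i j hj =>
    sum_eq_sum_filter_ne_ne_add (fun k => a k i * a k j) (mem_filter.1 hj).2.symm
  rw [sum_congr rfl fun i _ => sum_congr rfl (hsplit i)]
  simp only [sum_add_distrib]
  rw [sum_sum_filter_ne_comm (fun i j => a j i * a j j)]
  simp only [mul_comm (a _ _) (a _ _)]
  ring

theorem sum_sum_filter_ne_sum_mul_le_sum_sq (a : ι → ι → ℝ) :
    ∑ i, ∑ j ∈ univ.filter (fun j => j ≠ i),
        ∑ k ∈ univ.filter (fun k => k ≠ i ∧ k ≠ j), a k i * a k j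
      ≤ ∑ i, ∑ j ∈ univ.filter (fun j => j ≠ i),
          ∑ k ∈ univ.filter (fun k => k ≠ i ∧ k ≠ j), a k i ^ 2 := by
  have hswap : ∑ i, ∑ j ∈ univ.filter (fun j => j ≠ i),
        ∑ k ∈ univ.filter (fun k => k ≠ i ∧ k ≠ j), a k j ^ 2
      = ∑ i, ∑ j ∈ univ.filter (fun j => j ≠ i),
          ∑ k ∈ univ.filter (fun k => k ≠ i ∧ k ≠ j), a k i ^ 2 := by
    rw [sum_sum_filter_ne_comm]
    simp only [and_comm]
  calc _ ≤ ∑ i, ∑ j ∈ univ.filter (fun j => j ≠ i),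
          ∑ k ∈ univ.filter (fun k => k ≠ i ∧ k ≠ j), (a k i ^ 2 + a k j ^ 2) / 2 := by
        gcongr with i _ j _ k _
        nlinarith [sq_nonneg (a k i - a k j)]
    _ = _ := by
        simp only [add_div, sum_add_distrib, ← sum_div, hswap]
        ring

theorem sum_sum_filter_ne_card_sub_one (f : ι → ℝ) :
    ∑ i, ∑ _j ∈ univ.filter (fun j => j ≠ i), f i = ((Fintype.card ι : ℝ) - 1) * ∑ i, f i := by
  rw [mul_sum]
  refine sum_congr rfl fun i _ => ?_
  rw [sum_const, filter_ne', card_erase_of_mem (mem_univ i), card_univ, nsmul_eq_mul,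
    Nat.cast_sub (Fintype.card_pos_iff.2 ⟨i⟩), Nat.cast_one]

theorem sum_sum_filter_ne_diag_mul_le (a : ι → ι → ℝ) :
    ∑ i, ∑ j ∈ univ.filter (fun j => j ≠ i), a i i * a i j
      ≤ √(((Fintype.card ι : ℝ) - 1) * (∑ i, a i i ^ 2) *
          ∑ i, ∑ j ∈ univ.filter (fun j => j ≠ i), a i j ^ 2) := by
  apply Real.le_sqrt_of_sq_le
  have hcs := sum_mul_sq_le_sq_mul_sq (univ.sigma fun i => univ.filter (fun j => j ≠ i))
    (fun p => a p.1 p.1) (fun p => a p.1 p.2)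
  simp only [sum_sigma] at hcs
  rwa [sum_sum_filter_ne_card_sub_one] at hcs

end OffDiagonal

theorem Matrix.norm_conjTranspose_mul_self_apply_le {ι 𝕜 : Type*} [Fintype ι] [RCLike 𝕜]
    (B : Matrix ι ι 𝕜) (i j : ι) : ‖(Bᴴ * B) i j‖ ≤ ∑ k, ‖B k i‖ * ‖B k j‖ := by
  rw [mul_apply]
  refine (norm_sum_le _ _).trans_eq (sum_congr rfl fun k _ => ?_)
  rw [conjTranspose_apply, norm_mul, norm_star]

theorem duality_cauchy_schwarz_step_general (n : ℕ)
    (B : Matrix (Fin n) (Fin n) ℂ) :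
    ∑ i, ∑ j ∈ univ.filter (fun j => j ≠ i), ‖(Bᴴ * B) i j‖ ≤
      (∑ i, ∑ j ∈ univ.filter (fun j => j ≠ i),
        ∑ k ∈ univ.filter (fun k => k ≠ i ∧ k ≠ j), ‖B k i‖ ^ 2) +
      2 * Real.sqrt (((n : ℝ) - 1) * (∑ i, ‖B i i‖ ^ 2) *
        (∑ i, ∑ j ∈ univ.filter (fun j => j ≠ i), ‖B i j‖ ^ 2)) := by
  set a : Fin n → Fin n → ℝ := fun i j => ‖B i j‖
  have hdiag := sum_sum_filter_ne_diag_mul_le a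
  rw [Fintype.card_fin] at hdiag
  calc _ ≤ ∑ i, ∑ j ∈ univ.filter (fun j => j ≠ i), ∑ k, a k i * a k j := by
        gcongr with i _ j _
        exact B.norm_conjTranspose_mul_self_apply_le i j
    _ = _ := sum_sum_filter_ne_sum_mul a
    _ ≤ _ := add_le_add (sum_sum_filter_ne_sum_mul_le_sum_sq a) (by linarith)

/-- Double Cauchy–Schwarz step in the proof of Lemma 1:
`∑_{i≠j} |(Bᴴ B)_{ij}| ≤ ∑_{i≠j} ∑_{k∉{i,j}} |B_{ki}|² +
  2 √((n-1)(∑_i |B_{ii}|²)(∑_{i≠j} |B_{ij}|²))`. -/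
theorem duality_cauchy_schwarz_step (n : ℕ) (hn : 2 ≤ n)
    (B : Matrix (Fin n) (Fin n) ℂ) :
    ∑ i, ∑ j ∈ univ.filter (fun j => j ≠ i), ‖(Bᴴ * B) i j‖ ≤
      (∑ i, ∑ j ∈ univ.filter (fun j => j ≠ i),
        ∑ k ∈ univ.filter (fun k => k ≠ i ∧ k ≠ j), ‖B k i‖ ^ 2) +
      2 * Real.sqrt (((n : ℝ) - 1) * (∑ i, ‖B i i‖ ^ 2) *
        (∑ i, ∑ j ∈ univ.filter (fun j => j ≠ i), ‖B i j‖ ^ 2)) :=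
  duality_cauchy_schwarz_step_general n B
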